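/- Introducing a mediator increases stability: for a political structure P with k ≥ 2 agents and e hyperedges where e < 2^k - 1 (P is not complete), the stability of the cone CP is strictly greater than the stability of P, i.e. (2e + 1 - (k+1))/(2^{k+1} - (k+1) - 1) > (e - k)/(2^k - k - 1). -/
import Mathlib

lemma two_pow_ge (k : ℕ) (hk : 2 ≤ k) : k + 2 ≤ 2 ^ k := by
  induction k with
  | zero => omega
  | succ n ih =>
    rcases Nat.lt_or_ge n 2 with h | h
    · interval_cases n <;> simp_all <;> omega
    · have := ih h
      have : 2 ^ n ≥ n + 2 := this
      simp [pow_succ]; omega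

/-- Introducing a mediator increases stability: for a political structure with
`k ≥ 2` agents and `e` hyperedges, `e ≥ k`, which is not complete (`e < 2^k - 1`),
the stability of the cone `CP` (with `k + 1` agents and `2e + 1` hyperedges)
is strictly greater than the stability of `P`. -/
theorem cone_stability_increases {k e : ℕ} (hk : 2 ≤ k) (hek : k ≤ e)
    (he : e < 2 ^ k - 1) :
    ((e : ℝ) - k) / (2 ^ k - k - 1) <
      ((2 * (e : ℝ) + 1 - (k + 1)) / (2 ^ (k + 1) - (k + 1) - 1)) := by
  have hpow : (k : ℕ) + 2 ≤ 2 ^ k := two_pow_ge k hk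
  have hpowR : (k : ℝ) + 2 ≤ 2 ^ k := by exact_mod_cast hpow
  have heR : (e : ℝ) + 1 < 2 ^ k := by
    have : e + 1 < 2 ^ k := by omega
    exact_mod_cast this
  have hekR : (k : ℝ) ≤ e := by exact_mod_cast hek
  have hkR : (2 : ℝ) ≤ k := by exact_mod_cast hk
  have hA : (0 : ℝ) < 2 ^ k - k - 1 := by linarith
  have hB : (0 : ℝ) < 2 ^ (k + 1) - (k + 1) - 1 := by
    rw [pow_succ]; linarith
  rw [div_lt_div_iff₀ hA hB, pow_succ]
  nlinarith [mul_pos hA hB]
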